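/- arXiv:2004.07233 — 11 statements merged into one kernel-verified Lean document; each statement's English description precedes it below -/
import Mathlib

section
/- If 0 < l_z < u_z, 0 ≤ x, 0 ≤ y, z = xy, and l_z ≤ z ≤ u_z, then (z + √(l_z·u_z))² ≤ (√l_z + √u_z)²·x·y. -/
theorem stmt_3 (x y z l_z u_z : ℝ) (hl : 0 < l_z) (hlu : l_z < u_z)
    (hx : 0 ≤ x) (hy : 0 ≤ y) (hz : z = x * y) (hzl : l_z ≤ z) (hzu : z ≤ u_z) :
    (z + Real.sqrt (l_z * u_z)) ^ 2 ≤ (Real.sqrt l_z + Real.sqrt u_z) ^ 2 * x * y := by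
  have h1 : Real.sqrt l_z ^ 2 = l_z := Real.sq_sqrt hl.le
  have h2 : Real.sqrt u_z ^ 2 = u_z := Real.sq_sqrt (hl.trans hlu).le
  have h3 : Real.sqrt (l_z * u_z) ^ 2 = l_z * u_z := Real.sq_sqrt (mul_nonneg hl.le (hl.trans hlu).le)
  have hkey : (z - l_z) * (u_z - z) ≥ 0 :=
    mul_nonneg (sub_nonneg.2 hzl) (sub_nonneg.2 hzu)
  have hxy : x * y = z := hz.symm
  have hs : Real.sqrt (l_z * u_z) = Real.sqrt l_z * Real.sqrt u_z := Real.sqrt_mul hl.le _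
  rw [mul_assoc, hxy]
  nlinarith [hkey, h1, h2, h3, hs, hzl, hl]
end

section
/- Let 0 < l_z < u_z. For any z ≥ 0, the inequality (z + √(l_z·u_z))² ≤ (√l_z + √u_z)²·z holds if and only if l_z ≤ z ≤ u_z. -/
theorem stmt_4 (l_z u_z : ℝ) (hl : 0 < l_z) (hlu : l_z < u_z) (z : ℝ) (hz : 0 ≤ z) :
    (z + Real.sqrt (l_z * u_z)) ^ 2 ≤ (Real.sqrt l_z + Real.sqrt u_z) ^ 2 * z ↔
      l_z ≤ z ∧ z ≤ u_z := by
  have hu : 0 < u_z := hl.trans hlu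
  have h1 : Real.sqrt l_z ^ 2 = l_z := Real.sq_sqrt hl.le
  have h2 : Real.sqrt u_z ^ 2 = u_z := Real.sq_sqrt hu.le
  have h3 : Real.sqrt (l_z * u_z) = Real.sqrt l_z * Real.sqrt u_z :=
    Real.sqrt_mul hl.le _
  rw [h3]
  constructor
  · intro h
    constructor <;> nlinarith [Real.sqrt_nonneg l_z, Real.sqrt_nonneg u_z,
      mul_nonneg (Real.sqrt_nonneg l_z) (Real.sqrt_nonneg u_z)]
  · rintro ⟨ha, hb⟩
    nlinarith [Real.sqrt_nonneg l_z, Real.sqrt_nonneg u_z]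
end

section
/- If l_x ≥ 0, l_y ≥ 0, l_x ≤ x, l_y ≤ y, z = xy, and z ≤ u_z, then (z − l_y·x)·(z − l_x·y) ≤ u_z·(x − l_x)·(y − l_y). -/
theorem stmt_5 (x y z l_x l_y u_z : ℝ) (hlx0 : 0 ≤ l_x) (hly0 : 0 ≤ l_y)
    (hx : l_x ≤ x) (hy : l_y ≤ y) (hz : z = x * y) (hzu : z ≤ u_z) :
    (z - l_y * x) * (z - l_x * y) ≤ u_z * (x - l_x) * (y - l_y) := by
  subst hz
  have key : (x * y) * ((x - l_x) * (y - l_y)) ≤ u_z * ((x - l_x) * (y - l_y)) :=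
    mul_le_mul_of_nonneg_right hzu (mul_nonneg (sub_nonneg.2 hx) (sub_nonneg.2 hy))
  nlinarith [key]
end

section
/- Let 0 < l_z < 1 and let x, y ∈ [0,1] with xy ≥ l_z. Then xy ≤ ((x+y) − √((x−y)² + 4·l_z·(1−x)·(1−y)))/2. -/
theorem stmt_7 (l_z x y : ℝ) (hl0 : 0 < l_z) (hl1 : l_z < 1)
    (hx0 : 0 ≤ x) (hx1 : x ≤ 1) (hy0 : 0 ≤ y) (hy1 : y ≤ 1) (hxy : l_z ≤ x * y) :
    x * y ≤ ((x + y) - Real.sqrt ((x - y) ^ 2 + 4 * l_z * (1 - x) * (1 - y))) / 2 := by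
  have hnn : 0 ≤ x + y - 2 * (x * y) := by nlinarith
  have h1 : Real.sqrt ((x - y) ^ 2 + 4 * l_z * (1 - x) * (1 - y)) ≤ x + y - 2 * (x * y) := by
    rw [show x + y - 2 * (x * y) = Real.sqrt ((x + y - 2 * (x * y)) ^ 2) from
      (Real.sqrt_sq hnn).symm]
    apply Real.sqrt_le_sqrt
    nlinarith [mul_nonneg (sub_nonneg.2 hx1) (sub_nonneg.2 hy1)]
  linarith
end

section
/- Let 0 < l_z < 1, x, y ∈ [0,1], and z a real with z ≤ ((x+y) − √((x−y)² + 4·l_z·(1−x)·(1−y)))/2. Then the SOC form √((1−x, 1−y)ᵀ M (1−x, 1−y)) ≤ x + y − 2z holds, where M = [[1, 2l_z−1],[2l_z−1, 1]], and conversely. -/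
open Matrix in
theorem stmt_8 (l_z x y z : ℝ) (hl0 : 0 < l_z) (hl1 : l_z < 1)
    (hx0 : 0 ≤ x) (hx1 : x ≤ 1) (hy0 : 0 ≤ y) (hy1 : y ≤ 1) :
    z ≤ ((x + y) - Real.sqrt ((x - y) ^ 2 + 4 * l_z * (1 - x) * (1 - y))) / 2 ↔
      Real.sqrt (![1 - x, 1 - y] ⬝ᵥ
          (!![1, 2 * l_z - 1; 2 * l_z - 1, 1]).mulVec ![1 - x, 1 - y]) ≤ x + y - 2 * z := by
  have h : ![1 - x, 1 - y] ⬝ᵥ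
      (!![1, 2 * l_z - 1; 2 * l_z - 1, 1]).mulVec ![1 - x, 1 - y] =
      (x - y) ^ 2 + 4 * l_z * (1 - x) * (1 - y) := by
    simp [dotProduct, Matrix.mulVec, Fin.sum_univ_two]
    ring
  rw [h]
  constructor <;> intro hz <;> linarith
end

section
/- Let 0 < l_z < u_z ≤ 1 and x, y ∈ [0,1] with y ≤ u_z·x and l_z ≤ xy ≤ u_z. Then xy ≤ (u_z·x + y − √((u_z·x − y)² + 4·l_z·(1−x)·(u_z − y)))/2. -/
theorem stmt_11 (l_z u_z x y : ℝ) (hl0 : 0 < l_z) (hlu : l_z < u_z) (hu1 : u_z ≤ 1)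
    (hx0 : 0 ≤ x) (hx1 : x ≤ 1) (hy0 : 0 ≤ y) (hy1 : y ≤ 1)
    (hside : y ≤ u_z * x) (hxyl : l_z ≤ x * y) (hxyu : x * y ≤ u_z) :
    x * y ≤ (u_z * x + y - Real.sqrt ((u_z * x - y) ^ 2 + 4 * l_z * (1 - x) * (u_z - y))) / 2 := by
  have hyu : y ≤ u_z := le_trans hside (by nlinarith)
  have hpos : 0 ≤ u_z * x + y - 2 * (x * y) := by nlinarith
  have h2 : (u_z * x - y) ^ 2 + 4 * l_z * (1 - x) * (u_z - y)
      ≤ (u_z * x + y - 2 * (x * y)) ^ 2 := by nlinarith [mul_nonneg (mul_nonneg (sub_nonneg.2 hxyl) (sub_nonneg.2 hx1)) (sub_nonneg.2 hyu)]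
  have h1 : Real.sqrt ((u_z * x - y) ^ 2 + 4 * l_z * (1 - x) * (u_z - y))
      ≤ u_z * x + y - 2 * (x * y) := by
    calc Real.sqrt ((u_z * x - y) ^ 2 + 4 * l_z * (1 - x) * (u_z - y))
        ≤ Real.sqrt ((u_z * x + y - 2 * (x * y)) ^ 2) := Real.sqrt_le_sqrt h2
      _ = u_z * x + y - 2 * (x * y) := Real.sqrt_sq hpos
  linarith
end

section
/- Let 0 < u_z < 1. The volume of the region {(x,y,z) : 0 ≤ x,y ≤ 1, 0 ≤ z ≤ u_z, z ≥ x + y − 1, z ≤ x, z ≤ y} equals u_z·(u_z² − 3u_z + 3)/6. -/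
/-!
Slicing at fixed `x ∈ [0, 1]` leaves the parallelogram `0 ≤ z ≤ min u x`, `z ≤ y ≤ z + (1 - x)`,
which the shear `(y, z) ↦ (y - z, z)` maps onto a rectangle of area `(1 - x) · min u x`; for
`x ∉ [0, 1]` one side length is negative and the slice is empty. Integrating over `x`, split at
`u`, gives `∫₀ᵘ x (1 - x) dx + ∫ᵤ¹ u (1 - x) dx = u (u² - 3u + 3) / 6`.
-/

open MeasureTheory Set

theorem volume_parallelogram (m c : ℝ) :
    volume {q : ℝ × ℝ | 0 ≤ q.2 ∧ q.2 ≤ m ∧ q.2 ≤ q.1 ∧ q.1 ≤ q.2 + c} =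
      ENNReal.ofReal c * ENNReal.ofReal m := by
  have shear : {q : ℝ × ℝ | 0 ≤ q.2 ∧ q.2 ≤ m ∧ q.2 ≤ q.1 ∧ q.1 ≤ q.2 + c} =
      (fun q : ℝ × ℝ => (q.1 - q.2, q.2)) ⁻¹' Icc 0 c ×ˢ Icc 0 m := by
    ext q
    simp only [mem_ofPred_eq, mem_preimage, mem_prod, mem_Icc, sub_nonneg, sub_le_iff_le_add']
    tauto
  rw [shear, Measure.volume_eq_prod, (measurePreserving_sub_prod volume volume).measure_preimage
    (measurableSet_Icc.prod measurableSet_Icc).nullMeasurableSet, Measure.prod_prod,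
    Real.volume_Icc, Real.volume_Icc, sub_zero, sub_zero]

def mccormickSlab (u : ℝ) : Set (ℝ × ℝ × ℝ) :=
  {p | 0 ≤ p.1 ∧ p.1 ≤ 1 ∧ 0 ≤ p.2.1 ∧ p.2.1 ≤ 1 ∧ 0 ≤ p.2.2 ∧ p.2.2 ≤ u ∧
    p.1 + p.2.1 - 1 ≤ p.2.2 ∧ p.2.2 ≤ p.1 ∧ p.2.2 ≤ p.2.1}

theorem measurableSet_mccormickSlab (u : ℝ) : MeasurableSet (mccormickSlab u) := by
  refine IsClosed.measurableSet ?_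
  simp only [mccormickSlab, ofPred_and]
  repeat' apply IsClosed.inter
  all_goals exact isClosed_le (by fun_prop) (by fun_prop)

theorem mccormickSlab_slice (u x : ℝ) :
    Prod.mk x ⁻¹' mccormickSlab u =
      {q : ℝ × ℝ | 0 ≤ q.2 ∧ q.2 ≤ min u x ∧ q.2 ≤ q.1 ∧ q.1 ≤ q.2 + (1 - x)} := by
  ext ⟨y, z⟩
  simp only [mccormickSlab, mem_preimage, mem_ofPred_eq, le_min_iff]
  constructor
  · rintro ⟨-, -, -, -, hz, hzu, hxyz, hzx, hzy⟩
    exact ⟨hz, ⟨hzu, hzx⟩, hzy, by linarith⟩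
  · rintro ⟨hz, ⟨hzu, hzx⟩, hzy, hyz⟩
    refine ⟨?_, ?_, ?_, ?_, hz, hzu, ?_, hzx, hzy⟩ <;> linarith

theorem integral_min_mul_one_sub {u : ℝ} (h0 : 0 ≤ u) (h1 : u ≤ 1) :
    ∫ x in Icc (0 : ℝ) 1, min u x * (1 - x) = u * (u ^ 2 - 3 * u + 3) / 6 := by
  have hcont : Continuous fun x : ℝ => min u x * (1 - x) := by fun_prop
  rw [integral_Icc_eq_integral_Ioc, ← intervalIntegral.integral_of_le zero_le_one,
    ← intervalIntegral.integral_add_adjacent_intervals (hcont.intervalIntegrable 0 u)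
      (hcont.intervalIntegrable u 1)]
  have below : ∫ x in (0 : ℝ)..u, min u x * (1 - x) = ∫ x in (0 : ℝ)..u, (x - x ^ 2) := by
    refine intervalIntegral.integral_congr fun x hx => ?_
    rw [uIcc_of_le h0] at hx
    rw [min_eq_right hx.2]
    ring
  have above : ∫ x in u..(1 : ℝ), min u x * (1 - x) = ∫ x in u..(1 : ℝ), u * (1 - x) := by
    refine intervalIntegral.integral_congr fun x hx => ?_
    rw [uIcc_of_le h1] at hx
    rw [min_eq_left hx.1]
  rw [below, above, intervalIntegral.integral_sub intervalIntegral.intervalIntegrable_id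
    (intervalIntegral.intervalIntegrable_pow 2), intervalIntegral.integral_const_mul,
    intervalIntegral.integral_comp_sub_left (fun x => x), integral_id, integral_id, integral_pow]
  ring

theorem volume_slice_mccormickSlab {u : ℝ} (hu : 0 ≤ u) (x : ℝ) :
    volume (Prod.mk x ⁻¹' mccormickSlab u) =
      (Icc 0 1).indicator (fun x => ENNReal.ofReal (min u x * (1 - x))) x := by
  rw [mccormickSlab_slice, volume_parallelogram]
  by_cases hx : x ∈ Icc (0 : ℝ) 1
  · rw [indicator_of_mem hx, mul_comm, ENNReal.ofReal_mul (le_min hu hx.1)]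
  · rw [indicator_of_notMem hx]
    rcases not_and_or.1 hx with hx | hx
    · rw [ENNReal.ofReal_of_nonpos (min_le_of_right_le (not_le.1 hx).le), mul_zero]
    · rw [ENNReal.ofReal_of_nonpos (by linarith [not_le.1 hx]), zero_mul]

theorem stmt_12 (u_z : ℝ) (h0 : 0 < u_z) (h1 : u_z < 1) :
    MeasureTheory.volume {p : ℝ × ℝ × ℝ |
        0 ≤ p.1 ∧ p.1 ≤ 1 ∧ 0 ≤ p.2.1 ∧ p.2.1 ≤ 1 ∧ 0 ≤ p.2.2 ∧ p.2.2 ≤ u_z ∧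
        p.1 + p.2.1 - 1 ≤ p.2.2 ∧ p.2.2 ≤ p.1 ∧ p.2.2 ≤ p.2.1} =
      ENNReal.ofReal (u_z * (u_z ^ 2 - 3 * u_z + 3) / 6) := by
  change volume (mccormickSlab u_z) = _
  rw [Measure.volume_eq_prod, Measure.prod_apply (measurableSet_mccormickSlab u_z)]
  simp_rw [volume_slice_mccormickSlab h0.le]
  rw [lintegral_indicator measurableSet_Icc, ← ofReal_integral_eq_lintegral_ofReal,
    integral_min_mul_one_sub h0.le h1.le]
  · exact (by fun_prop : Continuous fun x : ℝ => min u_z x * (1 - x)).integrableOn_Icc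
  · filter_upwards [ae_restrict_mem measurableSet_Icc] with x hx
    exact mul_nonneg (le_min h0.le hx.1) (sub_nonneg.2 hx.2)
end

section
/- Let 0 < u_z < 1. The volume of the convex hull of {(x,y,xy) : x,y ∈ [0,1], xy ≤ u_z}, equal to the set {(x,y,z) : 0 ≤ x,y ≤ 1, z ≥ x+y−1, z ≥ 0, z ≤ x, z ≤ y, z ≤ u_z, z² ≤ u_z·x·y}, is (u_z/6)·(3 + 2u_z·ln(u_z) − u_z − u_z²). -/
/-!
Cut the region (with `t = u_z`) at height `z`. For `0 < z ≤ t` the slice is the set of `(x, y)`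
with `z ≤ x ≤ 1` and `max z (z² / (t x)) ≤ y ≤ 1 + z - x`; the two lower bounds cross at
`x = z / t`, so the slice area is an elementary integral with a logarithmic term,
`(1 - z)² / 2 + z² / t * (log t + 1 - t)`. This is a polynomial in `z`, and integrating it over
`[0, t]` gives the volume.
-/

open MeasureTheory Set

theorem MeasureTheory.Measure.prod_prod_apply_eq_lintegral_lintegral {α β γ : Type*}
    [MeasurableSpace α] [MeasurableSpace β] [MeasurableSpace γ]
    (μ : Measure α) (ν : Measure β) (ρ : Measure γ) [SFinite μ] [SFinite ν] [SFinite ρ]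
    {s : Set (α × β × γ)} (hs : MeasurableSet s) :
    μ.prod (ν.prod ρ) s = ∫⁻ z, ∫⁻ x, ν {y | (x, y, z) ∈ s} ∂μ ∂ρ := by
  rw [Measure.prod_apply hs]
  simp_rw [Measure.prod_apply_symm (hs.preimage measurable_prodMk_left)]
  refine lintegral_lintegral_swap ?_
  have hmeas : Measurable fun q : (α × γ) × β ↦ (q.1.1, q.2, q.1.2) := by fun_prop
  exact (measurable_measure_prodMk_left (hs.preimage hmeas)).aemeasurable

namespace McCormickSOC

def region (t : ℝ) : Set (ℝ × ℝ × ℝ) :=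
  {p : ℝ × ℝ × ℝ |
    0 ≤ p.1 ∧ p.1 ≤ 1 ∧ 0 ≤ p.2.1 ∧ p.2.1 ≤ 1 ∧
    p.1 + p.2.1 - 1 ≤ p.2.2 ∧ 0 ≤ p.2.2 ∧ p.2.2 ≤ p.1 ∧ p.2.2 ≤ p.2.1 ∧
    p.2.2 ≤ t ∧ p.2.2 ^ 2 ≤ t * p.1 * p.2.1}

theorem isClosed_region (t : ℝ) : IsClosed (region t) := by
  simp only [region, ofPred_and]
  repeat' apply IsClosed.inter
  all_goals exact isClosed_le (by fun_prop) (by fun_prop)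

noncomputable def sliceWidth (t z x : ℝ) : ℝ := 1 + z - x - max z (z ^ 2 / (t * x))

noncomputable def sliceArea (t z : ℝ) : ℝ := (1 - z) ^ 2 / 2 + z ^ 2 / t * (Real.log t + 1 - t)

section

variable {t z x : ℝ}

theorem slice_eq_empty (h : z < 0 ∨ t < z ∨ x < z ∨ 1 < x) :
    {y | (x, y, z) ∈ region t} = ∅ := by
  refine eq_empty_of_forall_notMem fun y ⟨_, hx1, _, _, _, hz0, hzx, _, hzt, _⟩ ↦ ?_
  rcases h with h | h | h | h <;> linarith

theorem slice_eq_Icc (hz : 0 < z) (hzt : z ≤ t) (hzx : z ≤ x) (hx1 : x ≤ 1) :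
    {y | (x, y, z) ∈ region t} = Icc (max z (z ^ 2 / (t * x))) (1 + z - x) := by
  have htx : 0 < t * x := by nlinarith
  ext y
  simp only [region, mem_ofPred_eq, mem_Icc, max_le_iff, div_le_iff₀ htx]
  constructor
  · rintro ⟨-, -, -, -, hsum, -, -, hzy, -, hsoc⟩
    exact ⟨⟨hzy, by linarith⟩, by linarith⟩
  · rintro ⟨⟨hzy, hsoc⟩, hsum⟩
    exact ⟨by linarith, hx1, by linarith, by linarith, by linarith, hz.le, hzx, hzy, hzt,
      by linarith⟩

theorem volume_slice (hz : 0 < z) (hzt : z ≤ t) :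
    volume {y | (x, y, z) ∈ region t} =
      (Icc z 1).indicator (fun x ↦ .ofReal (sliceWidth t z x)) x := by
  by_cases hx : x ∈ Icc z 1
  · rw [indicator_of_mem hx, slice_eq_Icc hz hzt hx.1 hx.2, Real.volume_Icc, sliceWidth]
  · rw [indicator_of_notMem hx, slice_eq_empty, measure_empty]
    rw [mem_Icc, not_and_or, not_le, not_le] at hx
    tauto

/-- `1 + z - x ≥ z² / (t x)` since `t ≥ z` and `x (1 + z - x) - z = (x - z) (1 - x) ≥ 0`. -/
theorem sliceWidth_nonneg (hz : 0 < z) (hzt : z ≤ t) (hx : x ∈ Icc z 1) :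
    0 ≤ sliceWidth t z x := by
  obtain ⟨hzx, hx1⟩ := hx
  have htx : 0 < t * x := by nlinarith
  rw [sliceWidth, sub_nonneg, max_le_iff, div_le_iff₀ htx]
  refine ⟨by linarith, ?_⟩
  nlinarith [mul_nonneg (sub_nonneg.2 hzx) (sub_nonneg.2 hx1),
    mul_nonneg (sub_nonneg.2 hzt) (mul_nonneg (hz.le.trans hzx) (sub_nonneg.2 hx1))]

theorem sliceWidth_of_le_div (ht : 0 < t) (hz : 0 < z) (hx : x ∈ Icc z (z / t)) :
    sliceWidth t z x = 1 + z - x - z ^ 2 / (t * x) := by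
  have htx : 0 < t * x := mul_pos ht (hz.trans_le hx.1)
  have hxt : x * t ≤ z := (le_div_iff₀ ht).1 hx.2
  rw [sliceWidth, max_eq_right ((le_div_iff₀ htx).2 (by nlinarith))]

theorem sliceWidth_of_div_le (ht : 0 < t) (hz : 0 < z) (hx : z / t ≤ x) :
    sliceWidth t z x = 1 - x := by
  have htx : 0 < t * x := mul_pos ht ((div_pos hz ht).trans_le hx)
  have hxt : z ≤ x * t := (div_le_iff₀ ht).1 hx
  rw [sliceWidth, max_eq_left ((div_le_iff₀ htx).2 (by nlinarith))]
  ring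

theorem continuousOn_sliceWidth (ht : 0 < t) (hz : 0 < z) :
    ContinuousOn (sliceWidth t z) (Ici z) := by
  have hne : ∀ x ∈ Ici z, t * x ≠ 0 := fun x hx ↦ (mul_pos ht (hz.trans_le hx)).ne'
  unfold sliceWidth
  fun_prop (disch := exact hne)

theorem integral_sliceWidth_self_div (ht : 0 < t) (hz : 0 < z) (hz_div : z ≤ z / t) :
    ∫ x in z..z / t, sliceWidth t z x
      = (1 + z) * (z / t - z) - ((z / t) ^ 2 - z ^ 2) / 2 + z ^ 2 / t * Real.log t := by
  have hpos : ∀ x ∈ uIcc z (z / t), 0 < x := fun x hx ↦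
    hz.trans_le (by rw [uIcc_of_le hz_div] at hx; exact hx.1)
  rw [intervalIntegral.integral_congr fun x hx ↦
      sliceWidth_of_le_div ht hz (by rwa [uIcc_of_le hz_div] at hx),
    intervalIntegral.integral_eq_sub_of_hasDerivAt
      (f := fun x ↦ (1 + z) * x - x ^ 2 / 2 - z ^ 2 / t * Real.log x)]
  · rw [Real.log_div hz.ne' ht.ne']
    ring
  · intro x hx
    refine ((((hasDerivAt_id x).const_mul (1 + z)).sub ((hasDerivAt_pow 2 x).div_const 2)).sub
      ((Real.hasDerivAt_log (hpos x hx).ne').const_mul (z ^ 2 / t))).congr_deriv ?_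
    have hx0 := (hpos x hx).ne'
    field_simp
    ring
  · refine ContinuousOn.intervalIntegrable ?_
    have hne : ∀ x ∈ uIcc z (z / t), t * x ≠ 0 := fun x hx ↦ (mul_pos ht (hpos x hx)).ne'
    fun_prop (disch := exact hne)

theorem integral_sliceWidth_div_one (ht : 0 < t) (hz : 0 < z) (hdiv_one : z / t ≤ 1) :
    ∫ x in z / t..1, sliceWidth t z x = (1 - 1 ^ 2 / 2) - (z / t - (z / t) ^ 2 / 2) := by
  rw [intervalIntegral.integral_congr fun x hx ↦
      sliceWidth_of_div_le ht hz (by rw [uIcc_of_le hdiv_one] at hx; exact hx.1),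
    intervalIntegral.integral_eq_sub_of_hasDerivAt (f := fun x ↦ x - x ^ 2 / 2)]
  · intro x _
    refine ((hasDerivAt_id x).sub ((hasDerivAt_pow 2 x).div_const 2)).congr_deriv ?_
    simp
  · exact (continuous_const.sub continuous_id).intervalIntegrable _ _

theorem integral_sliceWidth (hz : 0 < z) (hzt : z ≤ t) (ht1 : t ≤ 1) :
    ∫ x in z..1, sliceWidth t z x = sliceArea t z := by
  have ht : 0 < t := hz.trans_le hzt
  have hz_div : z ≤ z / t := le_div_self hz.le ht ht1
  have hdiv_one : z / t ≤ 1 := div_le_one_of_le₀ hzt ht.le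
  have hint {a b : ℝ} (ha : z ≤ a) (hb : z ≤ b) :
      IntervalIntegrable (sliceWidth t z) volume a b :=
    ((continuousOn_sliceWidth ht hz).mono fun x hx ↦
      le_trans (le_min ha hb) hx.1).intervalIntegrable
  rw [← intervalIntegral.integral_add_adjacent_intervals (hint le_rfl hz_div)
    (hint hz_div (hz_div.trans hdiv_one)), integral_sliceWidth_self_div ht hz hz_div,
    integral_sliceWidth_div_one ht hz hdiv_one, sliceArea]
  field_simp
  ring

theorem lintegral_volume_slice (hz : 0 < z) (hzt : z ≤ t) (ht1 : t ≤ 1) :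
    ∫⁻ x, volume {y | (x, y, z) ∈ region t} = .ofReal (sliceArea t z) := by
  simp_rw [volume_slice hz hzt]
  rw [lintegral_indicator measurableSet_Icc, ← ofReal_integral_eq_lintegral_ofReal,
    integral_Icc_eq_integral_Ioc, ← intervalIntegral.integral_of_le (hzt.trans ht1),
    integral_sliceWidth hz hzt ht1]
  · exact ((continuousOn_sliceWidth (hz.trans_le hzt) hz).mono
      Icc_subset_Ici_self).integrableOn_Icc
  · exact (ae_restrict_iff' measurableSet_Icc).2
      (.of_forall fun x hx ↦ sliceWidth_nonneg hz hzt hx)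

theorem continuous_sliceArea : Continuous (sliceArea t) := by
  unfold sliceArea
  fun_prop

theorem sliceArea_nonneg (hz : 0 < z) (hzt : z ≤ t) (ht1 : t ≤ 1) : 0 ≤ sliceArea t z :=
  integral_sliceWidth hz hzt ht1 ▸
    intervalIntegral.integral_nonneg (hzt.trans ht1) fun _ hx ↦ sliceWidth_nonneg hz hzt hx

theorem support_lintegral_volume_slice_subset :
    Function.support (fun z ↦ ∫⁻ x, volume {y | (x, y, z) ∈ region t}) ⊆ Icc 0 t := by
  intro z hz
  by_contra hz'
  rw [mem_Icc, not_and_or, not_le, not_le] at hz'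
  have hempty (x : ℝ) : {y | (x, y, z) ∈ region t} = ∅ := slice_eq_empty (by tauto)
  simp [hempty] at hz

theorem integral_sliceArea (ht : 0 < t) :
    ∫ z in (0 : ℝ)..t, sliceArea t z = t / 6 * (3 + 2 * t * Real.log t - t - t ^ 2) := by
  rw [intervalIntegral.integral_eq_sub_of_hasDerivAt
    (f := fun z ↦ -(1 - z) ^ 3 / 6 + z ^ 3 / (3 * t) * (Real.log t + 1 - t))]
  · field_simp
    ring
  · intro z _
    refine ((((hasDerivAt_id z).const_sub 1).pow 3 |>.neg.div_const 6).add
      ((hasDerivAt_pow 3 z).div_const (3 * t) |>.mul_const (Real.log t + 1 - t))).congr_deriv ?_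
    simp only [sliceArea, id]
    field_simp
    ring
  · exact continuous_sliceArea.intervalIntegrable _ _

end

end McCormickSOC

open McCormickSOC in
theorem stmt_13 (u_z : ℝ) (h0 : 0 < u_z) (h1 : u_z < 1) :
    MeasureTheory.volume {p : ℝ × ℝ × ℝ |
        0 ≤ p.1 ∧ p.1 ≤ 1 ∧ 0 ≤ p.2.1 ∧ p.2.1 ≤ 1 ∧
        p.1 + p.2.1 - 1 ≤ p.2.2 ∧ 0 ≤ p.2.2 ∧ p.2.2 ≤ p.1 ∧ p.2.2 ≤ p.2.1 ∧
        p.2.2 ≤ u_z ∧ p.2.2 ^ 2 ≤ u_z * p.1 * p.2.1} =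
      ENNReal.ofReal ((u_z / 6) * (3 + 2 * u_z * Real.log u_z - u_z - u_z ^ 2)) := by
  change volume (region u_z) = _
  rw [Measure.volume_eq_prod, Measure.volume_eq_prod,
    Measure.prod_prod_apply_eq_lintegral_lintegral _ _ _ (isClosed_region u_z).measurableSet,
    ← setLIntegral_eq_of_support_subset support_lintegral_volume_slice_subset,
    Measure.restrict_congr_set Ioc_ae_eq_Icc.symm,
    setLIntegral_congr_fun measurableSet_Ioc fun z hz ↦ lintegral_volume_slice hz.1 hz.2 h1.le,
    ← ofReal_integral_eq_lintegral_ofReal, ← intervalIntegral.integral_of_le h0.le,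
    integral_sliceArea h0]
  · exact continuous_sliceArea.integrableOn_Icc.mono_set Ioc_subset_Icc_self
  · exact (ae_restrict_iff' measurableSet_Ioc).2
      (.of_forall fun z hz ↦ sliceArea_nonneg hz.1 hz.2 h1.le)
end

section
/- The function f(b) = (b/6)(3 + 2b·ln b − b − b²) + ((1−b)/6)(1 + 2b·ln b − b²) on (0,1) has a critical point exactly where ln b = 2(b − 1), and this equation has a unique solution in (0,1). -/
/-!
Both hull volumes are polynomials in `b` and `b log b`, and their sum simplifies to
`(1 + 2b + 2b log b - 2b²) / 6`, whose derivative is `(log b - 2(b - 1)) / 3`.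
The function `g b = log b - 2(b - 1)` is strictly concave on `(0, ∞)` and vanishes at `1`, so it has
at most one further zero; it has one in `(e⁻², 1/2)` by the intermediate value theorem, since
`g e⁻² = -2e⁻² < 0 < 1 - log 2 = g (1/2)`.
-/

open Real Set

noncomputable def branchingVolume (b : ℝ) : ℝ :=
  (b / 6) * (3 + 2 * b * log b - b - b ^ 2) + ((1 - b) / 6) * (1 + 2 * b * log b - b ^ 2)

theorem hasDerivAt_branchingVolume {b : ℝ} (hb : 0 < b) :
    HasDerivAt branchingVolume ((log b - 2 * (b - 1)) / 3) b := by
  have hsum : branchingVolume = fun x => (1 + 2 * x + 2 * (x * log x) - 2 * x ^ 2) / 6 := by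
    funext x; unfold branchingVolume; ring
  have hderiv : HasDerivAt (fun x => (1 + 2 * x + 2 * (x * log x) - 2 * x ^ 2) / 6)
      ((0 + 2 * 1 + 2 * (log b + 1) - 2 * (2 * b ^ 1)) / 6) b :=
    ((((hasDerivAt_const b 1).add ((hasDerivAt_id b).const_mul 2)).add
      ((hasDerivAt_mul_log hb.ne').const_mul 2)).sub ((hasDerivAt_pow 2 b).const_mul 2)).div_const 6
  rw [hsum]
  convert hderiv using 1
  ring

theorem strictConcaveOn_log_sub_two_mul_sub_one :
    StrictConcaveOn ℝ (Ioi 0) fun b : ℝ => log b - 2 * (b - 1) :=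
  strictConcaveOn_log_Ioi.sub_convexOn
    ⟨convex_Ioi 0, fun _ _ _ _ _ _ _ _ hab => by
      simp only [smul_eq_mul]; linear_combination (2 : ℝ) * hab⟩

theorem StrictConcaveOn.lt_of_eq_of_lt_of_lt {s : Set ℝ} {g : ℝ → ℝ}
    (hg : StrictConcaveOn ℝ s g) {x y z : ℝ} (hx : x ∈ s) (hz : z ∈ s) (hxy : x < y) (hyz : y < z)
    (hxz : g x = g z) : g x < g y := by
  simpa [hxz] using hg.lt_on_openSegment hx hz (hxy.trans hyz).ne
    (Ioo_subset_openSegment ⟨hxy, hyz⟩)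

theorem le_of_log_eq_two_mul_sub_one {a c : ℝ} (ha : a ∈ Ioo 0 1) (hc : c ∈ Ioo 0 1)
    (hga : log a = 2 * (a - 1)) (hgc : log c = 2 * (c - 1)) : a ≤ c := by
  by_contra! hca
  have := strictConcaveOn_log_sub_two_mul_sub_one.lt_of_eq_of_lt_of_lt hc.1
    (mem_Ioi.2 one_pos) hca ha.2 (by simp [hgc])
  simp only [hga, hgc] at this
  linarith

theorem exists_log_eq_two_mul_sub_one : ∃ b ∈ Ioo (0 : ℝ) 1, log b = 2 * (b - 1) := by
  have hexp : exp (-2) < 1 / 2 := by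
    rw [exp_neg, inv_lt_comm₀ (exp_pos 2) (by norm_num)]
    linarith [add_one_le_exp (2 : ℝ)]
  have hcont : ContinuousOn (fun b => log b - 2 * (b - 1)) (Icc (exp (-2)) (1 / 2)) :=
    (continuousOn_log.mono fun x hx => (exp_pos _).trans_le hx.1 |>.ne').sub (by fun_prop)
  have hleft : log (exp (-2)) - 2 * (exp (-2) - 1) ≤ 0 := by
    rw [log_exp]; linarith [exp_pos (-2)]
  have hright : 0 ≤ log (1 / 2) - 2 * (1 / 2 - 1) := by
    rw [one_div, log_inv]; linarith [log_two_lt_d9]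
  obtain ⟨b, hb, hgb⟩ := intermediate_value_Icc hexp.le hcont ⟨hleft, hright⟩
  exact ⟨b, ⟨(exp_pos _).trans_le hb.1, by linarith [hb.2]⟩, by linarith [hgb]⟩

theorem stmt_16 (f : ℝ → ℝ)
    (hf : ∀ b, f b = (b / 6) * (3 + 2 * b * Real.log b - b - b ^ 2) +
      ((1 - b) / 6) * (1 + 2 * b * Real.log b - b ^ 2)) :
    (∀ b ∈ Set.Ioo (0 : ℝ) 1, deriv f b = 0 ↔ Real.log b = 2 * (b - 1)) ∧
      (∃! b, b ∈ Set.Ioo (0 : ℝ) 1 ∧ Real.log b = 2 * (b - 1)) := by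
  obtain rfl : f = branchingVolume := funext hf
  refine ⟨fun b hb => ?_, ?_⟩
  · rw [(hasDerivAt_branchingVolume hb.1).deriv, div_eq_zero_iff, sub_eq_zero]
    norm_num
  · obtain ⟨c, hc, hgc⟩ := exists_log_eq_two_mul_sub_one
    exact ⟨c, ⟨hc, hgc⟩, fun a ⟨ha, hga⟩ =>
      (le_of_log_eq_two_mul_sub_one ha hc hga hgc).antisymm
        (le_of_log_eq_two_mul_sub_one hc ha hgc hga)⟩
end

section
/- Let 0 < l_z < u_z ≤ 1, let x*, y* > 0 with x*·y* = l_z, set ρ = √(u_z/l_z), and let (x,y,z) lie on the segment joining (x*, y*, l_z) and (ρx*, ρy*, u_z). Then (z + √(l_z·u_z))² = (√l_z + √u_z)²·x·y. -/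
theorem stmt_18 (l_z u_z xs ys α x y z : ℝ)
    (hl0 : 0 < l_z) (hlu : l_z < u_z) (hu1 : u_z ≤ 1)
    (hxs0 : 0 < xs) (hys0 : 0 < ys) (hprod : xs * ys = l_z)
    (hα0 : 0 ≤ α) (hα1 : α ≤ 1)
    (hx : x = α * xs + (1 - α) * (Real.sqrt (u_z / l_z) * xs))
    (hy : y = α * ys + (1 - α) * (Real.sqrt (u_z / l_z) * ys))
    (hz : z = α * l_z + (1 - α) * u_z) :
    (z + Real.sqrt (l_z * u_z)) ^ 2 = (Real.sqrt l_z + Real.sqrt u_z) ^ 2 * x * y := by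
  have hl : (0:ℝ) ≤ l_z := hl0.le
  have hu : (0:ℝ) ≤ u_z := (hl0.trans hlu).le
  set s := Real.sqrt l_z with hsdef
  set t := Real.sqrt u_z with htdef
  have hs : s ^ 2 = l_z := Real.sq_sqrt hl
  have ht : t ^ 2 = u_z := Real.sq_sqrt hu
  have hs0 : 0 < s := Real.sqrt_pos.2 hl0
  have hst : Real.sqrt (l_z * u_z) = s * t := Real.sqrt_mul hl _
  have hquot : Real.sqrt (u_z / l_z) = t / s := Real.sqrt_div hu l_z
  rw [hst] at *
  rw [hquot] at hx hy
  subst hx hy hz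
  have key : (α * l_z + (1 - α) * u_z + s * t) * s =
      (s + t) * ((α * s + (1 - α) * t) * s) := by
    linear_combination (-(α * s)) * hs - ((1 - α) * s) * ht
  field_simp
  linear_combination ((α * l_z + (1 - α) * u_z + s * t) * s
      + (s + t) * ((α * s + (1 - α) * t) * s)) * key
    + ((s + t) * (α * s + (1 - α) * t)) ^ 2 * hs
    - ((s + t) * (α * s + (1 - α) * t)) ^ 2 * hprod
end

section
/- If x ∈ [0,1], y ∈ [0,1], and z = xy, then max(0, x + y − 1) ≤ z ≤ min(x, y); conversely, the convex hull of {(x,y,xy) : x,y ∈ [0,1]} equals {(x,y,z) : x,y ∈ [0,1], z ≥ 0, z ≥ x+y−1, z ≤ x, z ≤ y}. -/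
theorem stmt_19 :
    convexHull ℝ {p : ℝ × ℝ × ℝ | ∃ x y : ℝ,
        x ∈ Set.Icc (0 : ℝ) 1 ∧ y ∈ Set.Icc (0 : ℝ) 1 ∧ p = (x, y, x * y)} =
      {p : ℝ × ℝ × ℝ | p.1 ∈ Set.Icc (0 : ℝ) 1 ∧ p.2.1 ∈ Set.Icc (0 : ℝ) 1 ∧
        0 ≤ p.2.2 ∧ p.1 + p.2.1 - 1 ≤ p.2.2 ∧ p.2.2 ≤ p.1 ∧ p.2.2 ≤ p.2.1} := by
  set S : Set (ℝ × ℝ × ℝ) := {p : ℝ × ℝ × ℝ | ∃ x y : ℝ,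
      x ∈ Set.Icc (0 : ℝ) 1 ∧ y ∈ Set.Icc (0 : ℝ) 1 ∧ p = (x, y, x * y)} with hS
  apply Set.Subset.antisymm
  · apply convexHull_min
    · rintro p ⟨x, y, ⟨hx0, hx1⟩, ⟨hy0, hy1⟩, rfl⟩
      refine ⟨⟨hx0, hx1⟩, ⟨hy0, hy1⟩, ?_, ?_, ?_, ?_⟩ <;> dsimp only <;> nlinarith
    · rintro ⟨px, py, pz⟩ ⟨⟨hpx0, hpx1⟩, ⟨hpy0, hpy1⟩, hp1, hp2, hp3, hp4⟩
        ⟨qx, qy, qz⟩ ⟨⟨hqx0, hqx1⟩, ⟨hqy0, hqy1⟩, hq1, hq2, hq3, hq4⟩ a b ha hb hab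
      simp only [Prod.smul_mk, Prod.mk_add_mk, smul_eq_mul, Set.mem_setOf_eq,
        Set.mem_Icc] at *
      refine ⟨⟨?_, ?_⟩, ⟨?_, ?_⟩, ?_, ?_, ?_, ?_⟩ <;> nlinarith
  · rintro ⟨x, y, z⟩ ⟨⟨hx0, hx1⟩, ⟨hy0, hy1⟩, h1, h2, h3, h4⟩
    have hconv : Convex ℝ (convexHull ℝ S) := convex_convexHull ℝ S
    have key := hconv.sum_mem (t := (Finset.univ : Finset (Fin 4)))
      (w := ![1 - x - y + z, x - z, y - z, z])
      (z := ![((0:ℝ),(0:ℝ),(0:ℝ)), (1,0,0), (0,1,0), (1,1,1)])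
      (by intro i _; fin_cases i <;> simp <;> linarith)
      (by simp [Fin.sum_univ_four]; ring)
      (by
        intro i _
        fin_cases i <;> apply subset_convexHull
        · exact ⟨0, 0, by norm_num⟩
        · exact ⟨1, 0, by norm_num⟩
        · exact ⟨0, 1, by norm_num⟩
        · exact ⟨1, 1, by norm_num⟩)
    have heq : ∑ i : Fin 4, (![1 - x - y + z, x - z, y - z, z] i) •
        (![((0:ℝ),(0:ℝ),(0:ℝ)), (1,0,0), (0,1,0), (1,1,1)] i) = (x, y, z) := by
      simp only [Fin.sum_univ_four, Prod.smul_mk, Prod.mk_add_mk, smul_eq_mul,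
        Prod.mk.injEq]
      norm_num [Prod.ext_iff, Matrix.cons_val_two, Matrix.cons_val_three]
    rwa [heq] at key
end
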